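/- Let F₀ : ℝ³ × ℝ³ → ℝ be measurable with F₀ ≥ 0 almost everywhere, ∫F₀ = 1, ∫ x F₀ = 0, ∫ v F₀ = 0 and ∫ (|x|² + |v|²) F₀ < ∞ (all integrals over ℝ³×ℝ³ in dx dv). Set 𝖺 = ∫|x|²F₀, 𝖻 = ∫(x·v)F₀, 𝖼 = ∫|v|²F₀ and let 𝓡 = ∫(x ∧ v)F₀, a real skew-symmetric 3×3 matrix. Then 𝖺 > 0, 𝖼 > 0, 𝖺𝖼 − 𝖻² > 0 and tr(|𝓡|) < 2√(𝖺𝖼 − 𝖻²), where |𝓡| = √(𝓡ᵀ𝓡) is the positive semidefinite square root of 𝓡ᵀ𝓡. -/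

import Mathlib

open MeasureTheory ENNReal
open scoped Matrix

noncomputable section

abbrev E3 := EuclideanSpace ℝ (Fin 3)

/-- The Japanese bracket `⟨v⟩ = (1 + |v|²)^{1/2}`. -/
def jap (v : E3) : ℝ := Real.sqrt (1 + ‖v‖ ^ 2)

/-- Partial derivative of a function on `E3` in the `i`-th coordinate direction. -/
def pdE (i : Fin 3) (g : E3 → ℝ) : E3 → ℝ := fun x =>
  fderiv ℝ g x (EuclideanSpace.single i 1)

/-- `∂_{x_i}` acting on functions of `(x, v)`. -/
def pdX (i : Fin 3) (f : E3 → E3 → ℝ) : E3 → E3 → ℝ := fun x v =>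
  pdE i (fun x' => f x' v) x

/-- `∂_{v_i}` acting on functions of `(x, v)`. -/
def pdV (i : Fin 3) (f : E3 → E3 → ℝ) : E3 → E3 → ℝ := fun x v =>
  pdE i (fun v' => f x v') v

/-- Multi-index derivative `∂^α_x` for functions on `E3`. -/
def mDerivX (α : Fin 3 → ℕ) (g : E3 → ℝ) : E3 → ℝ :=
  (pdE 0)^[α 0] ((pdE 1)^[α 1] ((pdE 2)^[α 2] g))

/-- Multi-index derivative `∂^α_x ∂^β_v`. -/
def mDeriv (α β : Fin 3 → ℕ) (f : E3 → E3 → ℝ) : E3 → E3 → ℝ :=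
  (pdX 0)^[α 0] ((pdX 1)^[α 1] ((pdX 2)^[α 2]
    ((pdV 0)^[β 0] ((pdV 1)^[β 1] ((pdV 2)^[β 2] f)))))

/-- Total degree `|α|` of a multi-index. -/
def deg (α : Fin 3 → ℕ) : ℕ := ∑ i, α i

/-- Euclidean dot product on `ℝ³`. -/
def dot3 (x v : E3) : ℝ := ∑ i, x i * v i

/-- The matrix `a_{ij}(z) = |z|⁻¹ (δ_{ij} - z_i z_j / |z|²)`. -/
def aLandau (z : E3) (i j : Fin 3) : ℝ :=
  ‖z‖⁻¹ * ((if i = j then (1 : ℝ) else 0) - z i * z j / ‖z‖ ^ 2)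

/-- The Landau collision operator `Q(G, F)`. -/
def landauQ (G F : E3 → ℝ) (v : E3) : ℝ :=
  (∑ i, ∑ j, (∫ w : E3, aLandau (v - w) i j * G w) * pdE i (pdE j F) v)
    + 8 * Real.pi * G v * F v

/-- `X(t) = x cos t - v sin t`. -/
def Xrot (t : ℝ) (x v : E3) : E3 := Real.cos t • x - Real.sin t • v

/-- `V(t) = x sin t + v cos t`. -/
def Vrot (t : ℝ) (x v : E3) : E3 := Real.sin t • x + Real.cos t • v

/-- `tr |R|` where `|R| = √(Rᵀ R)` (over `ℝ`, `Rᴴ = Rᵀ`). -/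
def traceAbs (R : Matrix (Fin 3) (Fin 3) ℝ) : ℝ :=
  (((Matrix.posSemidef_conjTranspose_mul_self R).1.eigenvectorUnitary :
      Matrix (Fin 3) (Fin 3) ℝ) *
    Matrix.diagonal ((RCLike.ofReal : ℝ → ℝ) ∘ (√·) ∘ (Matrix.posSemidef_conjTranspose_mul_self R).1.eigenvalues) *
    (star (Matrix.posSemidef_conjTranspose_mul_self R).1.eigenvectorUnitary :
      Matrix (Fin 3) (Fin 3) ℝ)).trace

/-- The parameter set `𝒪`. -/
def InO (a b c : ℝ) (R : Matrix (Fin 3) (Fin 3) ℝ) : Prop :=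
  0 < a ∧ 0 < c ∧ 0 < a * c - b ^ 2 ∧ Rᵀ = -R ∧
    traceAbs R < 2 * Real.sqrt (a * c - b ^ 2)

/-- `Q̂ = (ac - b²) I + R²`. -/
def Qhat (a b c : ℝ) (R : Matrix (Fin 3) (Fin 3) ℝ) : Matrix (Fin 3) (Fin 3) ℝ :=
  (a * c - b ^ 2) • (1 : Matrix (Fin 3) (Fin 3) ℝ) + R * R

/-- The time-periodic Maxwell–Boltzmann distribution with parameters `(m, y, z, a, b, c, R)`. -/
def MBdist (m : ℝ) (y z : E3) (a b c : ℝ) (R : Matrix (Fin 3) (Fin 3) ℝ)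
    (t : ℝ) (x v : E3) : ℝ :=
  m * (Real.sqrt (Qhat a b c R).det / (2 * Real.pi) ^ 3) *
    Real.exp (-(1 / 2) *
      (a * ‖Xrot t x v - y‖ ^ 2 + 2 * b * dot3 (Xrot t x v - y) (Vrot t x v - z)
        + c * ‖Vrot t x v - z‖ ^ 2
        + 2 * ∑ i, ∑ j, (Xrot t x v - y) i * R i j * (Vrot t x v - z) j))

/-- The thirteen conserved quantities `Ψ₀(F)`. -/
def psi0 (F : E3 → E3 → ℝ) :
    ℝ × (Fin 3 → ℝ) × (Fin 3 → ℝ) × ℝ × ℝ × ℝ × Matrix (Fin 3) (Fin 3) ℝ :=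
  (∫ p : E3 × E3, F p.1 p.2,
   fun i => ∫ p : E3 × E3, p.1 i * F p.1 p.2,
   fun i => ∫ p : E3 × E3, p.2 i * F p.1 p.2,
   ∫ p : E3 × E3, ‖p.1‖ ^ 2 * F p.1 p.2,
   ∫ p : E3 × E3, dot3 p.1 p.2 * F p.1 p.2,
   ∫ p : E3 × E3, ‖p.2‖ ^ 2 * F p.1 p.2,
   Matrix.of (fun i j => ∫ p : E3 × E3, (p.1 i * p.2 j - p.2 i * p.1 j) * F p.1 p.2))

/-- Sum of `f α β` over all multi-indices with `|α| + |β| ≤ N` (values in `ℝ≥0∞`). -/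
def sumIdxE (N : ℕ) (f : (Fin 3 → ℕ) → (Fin 3 → ℕ) → ℝ≥0∞) : ℝ≥0∞ :=
  ∑ α : Fin 3 → Fin (N + 1), ∑ β : Fin 3 → Fin (N + 1),
    if (∑ i, (α i : ℕ)) + (∑ i, (β i : ℕ)) ≤ N
    then f (fun i => (α i : ℕ)) (fun i => (β i : ℕ)) else 0

/-- Sum of `f α β` over all multi-indices with `|α| + |β| ≤ N` (values in `ℝ`). -/
def sumIdxR (N : ℕ) (f : (Fin 3 → ℕ) → (Fin 3 → ℕ) → ℝ) : ℝ :=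
  ∑ α : Fin 3 → Fin (N + 1), ∑ β : Fin 3 → Fin (N + 1),
    if (∑ i, (α i : ℕ)) + (∑ i, (β i : ℕ)) ≤ N
    then f (fun i => (α i : ℕ)) (fun i => (β i : ℕ)) else 0

/-- Sum of `f α β` over all multi-indices with `|α| + |β| = N` (values in `ℝ`). -/
def sumIdxEqR (N : ℕ) (f : (Fin 3 → ℕ) → (Fin 3 → ℕ) → ℝ) : ℝ :=
  ∑ α : Fin 3 → Fin (N + 1), ∑ β : Fin 3 → Fin (N + 1),
    if (∑ i, (α i : ℕ)) + (∑ i, (β i : ℕ)) = N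
    then f (fun i => (α i : ℕ)) (fun i => (β i : ℕ)) else 0

/-- Sum of `f α` over all multi-indices with `|α| ≤ N` (values in `ℝ`). -/
def sumIdxXR (N : ℕ) (f : (Fin 3 → ℕ) → ℝ) : ℝ :=
  ∑ α : Fin 3 → Fin (N + 1),
    if (∑ i, (α i : ℕ)) ≤ N then f (fun i => (α i : ℕ)) else 0

/-- Weighted `L²` norm (as an extended nonnegative real). -/
def wL2 (w g : E3 → E3 → ℝ) : ℝ≥0∞ :=
  eLpNorm (fun p : E3 × E3 => w p.1 p.2 * g p.1 p.2) 2 volume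

/-- `Σ_{|α|+|β|≤5} ‖ M(t)^{θ(|α|+|β|)} ∂^α_x ∂^β_v (G - M(t)) ‖_{L²}`. -/
def normM (M : ℝ → E3 → E3 → ℝ) (θ : ℕ → ℝ) (G : E3 → E3 → ℝ) (t : ℝ) : ℝ≥0∞ :=
  sumIdxE 5 (fun α β =>
    wL2 (fun x v => M t x v ^ θ (deg α + deg β))
      (mDeriv α β (fun x v => G x v - M t x v)))

/-- Smooth nonnegative solutions on `[0,∞)` of the Landau equation with harmonic potential. -/
def IsLandauSolution (F : ℝ → E3 → E3 → ℝ) : Prop :=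
  ContDiffOn ℝ (⊤ : ℕ∞) (fun p : ℝ × E3 × E3 => F p.1 p.2.1 p.2.2)
      (Set.Ici (0 : ℝ) ×ˢ (Set.univ : Set (E3 × E3))) ∧
    (∀ t, 0 ≤ t → ∀ x v, 0 ≤ F t x v) ∧
    ∀ t, 0 ≤ t → ∀ x v : E3,
      derivWithin (fun s => F s x v) (Set.Ici 0) t
          + (∑ i, v i * pdX i (F t) x v) - (∑ i, x i * pdV i (F t) x v)
        = landauQ (F t x) (F t x) v

/-- The normalized Maxwellian `μ`. -/
def mu0 (v : E3) : ℝ := (2 * Real.pi) ^ (-(3 : ℝ) / 2) * Real.exp (-‖v‖ ^ 2 / 2)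

/-- Squared weighted norm `‖g‖²_{L²_l}`. -/
def L2wSq (l : ℝ) (g : E3 → ℝ) : ℝ := ∫ v : E3, jap v ^ (2 * l) * g v ^ 2

/-- `|∇g|²`. -/
def gradNormSq (g : E3 → ℝ) (x : E3) : ℝ := ∑ i, pdE i g x ^ 2

/-- Squared weighted norm `‖g‖²_{H¹_l}`. -/
def H1wSq (l : ℝ) (g : E3 → ℝ) : ℝ :=
  L2wSq l g + ∫ v : E3, jap v ^ (2 * l) * gradNormSq g v

/-- Components of `𝕋_{𝕊²} g = v × ∇ g`. -/
def TsphComp (g : E3 → ℝ) (v : E3) (i : Fin 3) : ℝ :=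
  v (i + 1) * pdE (i + 2) g v - v (i + 2) * pdE (i + 1) g v

/-- Squared weighted norm `‖𝕋_{𝕊²} g‖²_{L²_l}`. -/
def TsphL2Sq (l : ℝ) (g : E3 → ℝ) : ℝ :=
  ∫ v : E3, jap v ^ (2 * l) * ∑ i, TsphComp g v i ^ 2

/-- Squared Sobolev norm `‖g‖²_{H^N_{x,v}}`. -/
def HSobSq (N : ℕ) (g : E3 → E3 → ℝ) : ℝ :=
  sumIdxR N (fun α β => ∫ p : E3 × E3, mDeriv α β g p.1 p.2 ^ 2)



instance : (volume : Measure (E3 × E3)).IsAddHaarMeasure :=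
  (MeasureTheory.Measure.volume_eq_prod E3 E3).symm ▸
    (Measure.prod.instIsAddHaarMeasure (volume : Measure E3) (volume : Measure E3))

def zz (p : E3 × E3) : Fin 3 ⊕ Fin 3 → ℝ :=
  Sum.elim (fun i => p.1 i) (fun i => p.2 i)

def mom (F₀ : E3 → E3 → ℝ) (k l : Fin 3 ⊕ Fin 3) : ℝ :=
  ∫ p : E3 × E3, zz p k * zz p l * F₀ p.1 p.2

lemma zz_meas (k : Fin 3 ⊕ Fin 3) : Measurable fun p : E3 × E3 => zz p k := by
  cases k <;> (dsimp [zz]; fun_prop)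

lemma norm_sq_eq (x : E3) : ‖x‖ ^ 2 = ∑ i, x i ^ 2 := by
  rw [EuclideanSpace.norm_eq, Real.sq_sqrt (by positivity)]
  exact Finset.sum_congr rfl fun i _ => by simp [Real.norm_eq_abs, sq_abs]

lemma zz_sq_le (p : E3 × E3) (k : Fin 3 ⊕ Fin 3) :
    zz p k ^ 2 ≤ ‖p.1‖ ^ 2 + ‖p.2‖ ^ 2 := by
  have h1 : ‖p.1‖ ^ 2 = ∑ i, p.1 i ^ 2 := norm_sq_eq _
  have h2 : ‖p.2‖ ^ 2 = ∑ i, p.2 i ^ 2 := norm_sq_eq _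
  have h1n : (0:ℝ) ≤ ‖p.1‖ ^ 2 := by positivity
  have h2n : (0:ℝ) ≤ ‖p.2‖ ^ 2 := by positivity
  cases k with
  | inl i =>
    have : p.1 i ^ 2 ≤ ∑ j, p.1 j ^ 2 :=
      Finset.single_le_sum (f := fun j => p.1 j ^ 2) (fun j _ => sq_nonneg _) (Finset.mem_univ i)
    simp only [zz, Sum.elim_inl]
    linarith [h1 ▸ this]
  | inr i =>
    have : p.2 i ^ 2 ≤ ∑ j, p.2 j ^ 2 :=
      Finset.single_le_sum (f := fun j => p.2 j ^ 2) (fun j _ => sq_nonneg _) (Finset.mem_univ i)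
    simp only [zz, Sum.elim_inr]
    linarith [h2 ▸ this]

lemma momSymm' (F₀ : E3 → E3 → ℝ) (i j : Fin 3) :
    mom F₀ (Sum.inr i) (Sum.inl j) = mom F₀ (Sum.inl j) (Sum.inr i) := by
  unfold mom
  congr 1
  funext p
  ring

section WithHyp
variable (F₀ : E3 → E3 → ℝ)
  (hmeas : Measurable fun p : E3 × E3 => F₀ p.1 p.2)
  (hpos : ∀ᵐ p : E3 × E3 ∂volume, 0 ≤ F₀ p.1 p.2)
  (hint2 : Integrable fun p : E3 × E3 => (‖p.1‖ ^ 2 + ‖p.2‖ ^ 2) * F₀ p.1 p.2)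

include hmeas hpos hint2

lemma integ_mom (k l : Fin 3 ⊕ Fin 3) :
    Integrable (fun p : E3 × E3 => zz p k * zz p l * F₀ p.1 p.2) := by
  refine hint2.mono' ?_ ?_
  · exact (((zz_meas k).mul (zz_meas l)).mul hmeas).aestronglyMeasurable
  · filter_upwards [hpos] with p hp
    have h1 := zz_sq_le p k
    have h2 := zz_sq_le p l
    have hb : |zz p k * zz p l| ≤ ‖p.1‖ ^ 2 + ‖p.2‖ ^ 2 := by
      rw [abs_mul]
      nlinarith [abs_nonneg (zz p k), abs_nonneg (zz p l), sq_abs (zz p k), sq_abs (zz p l)]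
    calc ‖zz p k * zz p l * F₀ p.1 p.2‖
        = |zz p k * zz p l| * F₀ p.1 p.2 := by
          rw [Real.norm_eq_abs, abs_mul, abs_of_nonneg hp]
      _ ≤ (‖p.1‖ ^ 2 + ‖p.2‖ ^ 2) * F₀ p.1 p.2 := mul_le_mul_of_nonneg_right hb hp

lemma qform_eq (w : Fin 3 ⊕ Fin 3 → ℝ) :
    (∫ p : E3 × E3, (∑ k, w k * zz p k) ^ 2 * F₀ p.1 p.2)
      = ∑ k, ∑ l, w k * w l * mom F₀ k l := by
  have hpt : (fun p : E3 × E3 => (∑ k, w k * zz p k) ^ 2 * F₀ p.1 p.2)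
      = fun p => ∑ k, ∑ l, w k * w l * (zz p k * zz p l * F₀ p.1 p.2) := by
    funext p
    rw [sq, Finset.sum_mul_sum, Finset.sum_mul]
    refine Finset.sum_congr rfl fun k _ => ?_
    rw [Finset.sum_mul]
    exact Finset.sum_congr rfl fun l _ => by ring
  rw [hpt, integral_finset_sum _ fun k _ =>
    integrable_finset_sum _ fun l _ => (integ_mom F₀ hmeas hpos hint2 k l).const_mul _]
  refine Finset.sum_congr rfl fun k _ => ?_
  rw [integral_finset_sum _ fun l _ => (integ_mom F₀ hmeas hpos hint2 k l).const_mul _]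
  exact Finset.sum_congr rfl fun l _ => integral_const_mul _ _

lemma qform_nonneg (w : Fin 3 ⊕ Fin 3 → ℝ) :
    0 ≤ ∑ k, ∑ l, w k * w l * mom F₀ k l := by
  rw [← qform_eq F₀ hmeas hpos hint2 w]
  apply integral_nonneg_of_ae
  filter_upwards [hpos] with p hp
  positivity

lemma qform_pos (hmass : (∫ p : E3 × E3, F₀ p.1 p.2) = 1)
    (w : Fin 3 ⊕ Fin 3 → ℝ) (hw : w ≠ 0) :
    0 < ∑ k, ∑ l, w k * w l * mom F₀ k l := by
  rw [← qform_eq F₀ hmeas hpos hint2 w]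
  set g : E3 × E3 → ℝ := fun p => (∑ k, w k * zz p k) ^ 2 * F₀ p.1 p.2 with hg
  have hgnn : 0 ≤ᵐ[volume] g := hpos.mono fun p hp => by positivity
  have hgi : Integrable g := by
    have hpt : g = fun p => ∑ k, ∑ l, w k * w l * (zz p k * zz p l * F₀ p.1 p.2) := by
      funext p
      show (∑ k, w k * zz p k) ^ 2 * F₀ p.1 p.2 = _
      rw [sq, Finset.sum_mul_sum, Finset.sum_mul]
      refine Finset.sum_congr rfl fun k _ => ?_
      rw [Finset.sum_mul]
      exact Finset.sum_congr rfl fun l _ => by ring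
    rw [hpt]
    exact integrable_finset_sum _ fun k _ =>
      integrable_finset_sum _ fun l _ => (integ_mom F₀ hmeas hpos hint2 k l).const_mul _
  rcases (integral_nonneg_of_ae hgnn).lt_or_eq with h | h
  · exact h
  exfalso
  have hz : g =ᵐ[volume] 0 := (integral_eq_zero_iff_of_nonneg_ae hgnn hgi).mp h.symm
  -- the linear functional
  set coordL : (Fin 3 ⊕ Fin 3) → ((E3 × E3) →ₗ[ℝ] ℝ) := Sum.elim
    (fun i => ((EuclideanSpace.proj i : E3 →L[ℝ] ℝ) : E3 →ₗ[ℝ] ℝ).comp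
      (LinearMap.fst ℝ E3 E3))
    (fun i => ((EuclideanSpace.proj i : E3 →L[ℝ] ℝ) : E3 →ₗ[ℝ] ℝ).comp
      (LinearMap.snd ℝ E3 E3)) with hcoordL
  set ℓ : (E3 × E3) →ₗ[ℝ] ℝ := ∑ k, w k • coordL k with hℓdef
  have hℓ : ∀ p : E3 × E3, ℓ p = ∑ k, w k * zz p k := by
    intro p
    rw [hℓdef, LinearMap.sum_apply]
    refine Finset.sum_congr rfl fun k _ => ?_
    cases k <;> simp [hcoordL, zz]
  have hker : LinearMap.ker ℓ ≠ ⊤ := by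
    intro htop
    obtain ⟨k0, hk0⟩ := Function.ne_iff.mp hw
    set q : E3 × E3 := ((WithLp.equiv 2 (Fin 3 → ℝ)).symm fun i => w (Sum.inl i),
      (WithLp.equiv 2 (Fin 3 → ℝ)).symm fun i => w (Sum.inr i)) with hq
    have hqval : ℓ q = ∑ k, w k ^ 2 := by
      rw [hℓ]
      refine Finset.sum_congr rfl fun k _ => ?_
      cases k <;> · simp only [zz, hq, Sum.elim_inl, Sum.elim_inr, WithLp.equiv_symm_apply]
                    ring
    have hqpos : 0 < ∑ k, w k ^ 2 :=
      Finset.sum_pos' (fun k _ => sq_nonneg _)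
        ⟨k0, Finset.mem_univ _, sq_pos_of_ne_zero hk0⟩
    have hq0 : ℓ q = 0 := by
      have : q ∈ LinearMap.ker ℓ := htop ▸ Submodule.mem_top
      exact LinearMap.mem_ker.mp this
    rw [hqval] at hq0
    exact hqpos.ne' hq0
  have hnull : volume {p : E3 × E3 | ℓ p = 0} = 0 := by
    have := Measure.addHaar_submodule (volume : Measure (E3 × E3)) (LinearMap.ker ℓ) hker
    convert this using 2
    ext p; simp [LinearMap.mem_ker]
  have hae : ∀ᵐ p : E3 × E3, ℓ p ≠ 0 := by
    rw [ae_iff]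
    simpa using hnull
  have hF0 : (fun p : E3 × E3 => F₀ p.1 p.2) =ᵐ[volume] 0 := by
    filter_upwards [hz, hae] with p h1 h2
    have hsum : (∑ k, w k * zz p k) ≠ 0 := by rw [← hℓ p]; exact h2
    have h1' : (∑ k, w k * zz p k) ^ 2 * F₀ p.1 p.2 = 0 := h1
    have := mul_eq_zero.mp h1'
    rcases this with h | h
    · exact absurd (pow_eq_zero_iff (two_ne_zero) |>.mp h) hsum
    · exact h
  have : (∫ p : E3 × E3, F₀ p.1 p.2) = 0 := integral_eq_zero_of_ae hF0
  rw [hmass] at this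
  exact one_ne_zero this

end WithHyp

def crossMat (ω : Fin 3 → ℝ) : Matrix (Fin 3) (Fin 3) ℝ :=
  !![0, ω 2, -ω 1; -ω 2, 0, ω 0; ω 1, -ω 0, 0]

lemma traceAbs_crossMat (ω : Fin 3 → ℝ) :
    traceAbs (crossMat ω) = 2 * Real.sqrt (ω 0 ^ 2 + ω 1 ^ 2 + ω 2 ^ 2) := by
  set s : ℝ := ω 0 ^ 2 + ω 1 ^ 2 + ω 2 ^ 2 with hs
  have hs0 : (0:ℝ) ≤ s := by positivity
  set n := Real.sqrt s with hn
  have hn0 : 0 ≤ n := Real.sqrt_nonneg _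
  have hn2 : n ^ 2 = s := Real.sq_sqrt hs0
  set R := crossMat ω with hR
  have hKey : (Rᴴ * R) * (Rᴴ * R) = s • (Rᴴ * R) := by
    ext i j
    fin_cases i <;> fin_cases j <;>
      · simp only [Matrix.mul_apply, Matrix.smul_apply, Fin.sum_univ_three,
          Matrix.conjTranspose_apply, star_trivial, hR, crossMat, smul_eq_mul]
        simp
        rw [hs]
        ring
  have htr : (Rᴴ * R).trace = 2 * s := by
    simp only [Matrix.trace, Matrix.diag, Matrix.mul_apply, Matrix.conjTranspose_apply,
      Fin.sum_univ_three, star_trivial, hR, crossMat]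
    simp
    rw [hs]
    ring
  rw [traceAbs]
  generalize (Matrix.posSemidef_conjTranspose_mul_self R).1 = H
  have htA : ((H.eigenvectorUnitary : Matrix (Fin 3) (Fin 3) ℝ) *
      Matrix.diagonal ((RCLike.ofReal : ℝ → ℝ) ∘ (√·) ∘ H.eigenvalues) *
      (star H.eigenvectorUnitary : Matrix (Fin 3) (Fin 3) ℝ)).trace
        = ∑ i, √(H.eigenvalues i) := by
    rw [Matrix.trace_mul_comm, ← mul_assoc]
    simp [Unitary.coe_star, Matrix.trace_diagonal]
  rw [htA]
  have hev : ∀ i, H.eigenvalues i ^ 2 = s * H.eigenvalues i := by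
    intro i
    have hv := H.mulVec_eigenvectorBasis i
    have hne : (⇑(H.eigenvectorBasis i) : Fin 3 → ℝ) ≠ 0 :=
      (WithLp.ofLp_eq_zero 2).ne.2 (H.eigenvectorBasis.orthonormal.ne_zero i)
    have h2 := congrArg (fun M => M *ᵥ ⇑(H.eigenvectorBasis i)) hKey
    simp only [← Matrix.mulVec_mulVec, Matrix.smul_mulVec, hv, Matrix.mulVec_smul,
      smul_smul] at h2
    have h3 := sub_eq_zero.mpr h2
    rw [← sub_smul] at h3
    rcases smul_eq_zero.mp h3 with h | h
    · rw [pow_two]; linarith [h]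
    · exact absurd h hne
  have hsum : ∑ i, H.eigenvalues i = 2 * s := by
    rw [← htr, H.trace_eq_sum_eigenvalues]
    simp
  have hmul : ∀ i, √(H.eigenvalues i) * n = H.eigenvalues i := by
    intro i
    have h := hev i
    have : H.eigenvalues i = 0 ∨ H.eigenvalues i = s := by
      have : H.eigenvalues i * (H.eigenvalues i - s) = 0 := by rw [mul_sub, ← pow_two, h]; ring
      rcases mul_eq_zero.mp this with h' | h'
      · exact Or.inl h'
      · exact Or.inr (by linarith)
    rcases this with h' | h'
    · rw [h']; simp
    · rw [h', hn]; exact Real.mul_self_sqrt hs0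
  by_cases h : n = 0
  · have hss : s = 0 := by rw [← hn2, h]; ring
    have hz : ∀ i, H.eigenvalues i = 0 := fun i => by
      have := hev i; rw [hss, zero_mul] at this; exact pow_eq_zero_iff two_ne_zero |>.mp this
    rw [h]
    simp only [hz, Real.sqrt_zero, Finset.sum_const_zero, mul_zero]
  · have hnpos : 0 < n := lt_of_le_of_ne hn0 (Ne.symm h)
    have : (∑ i, √(H.eigenvalues i)) * n = (2 * n) * n := by
      rw [Finset.sum_mul, Finset.sum_congr rfl fun i _ => hmul i, hsum, ← hn2]; ring
    exact mul_right_cancel₀ hnpos.ne' this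

lemma qexpand (F₀ : E3 → E3 → ℝ) (p q r t u v : ℝ) :
    (∑ k, ∑ l, (Sum.elim ![p, q, r] ![t, u, v]) k * (Sum.elim ![p, q, r] ![t, u, v]) l * mom F₀ k l)
      = p * p * mom F₀ (Sum.inl 0) (Sum.inl 0)
        + p * q * mom F₀ (Sum.inl 0) (Sum.inl 1)
        + p * r * mom F₀ (Sum.inl 0) (Sum.inl 2)
        + q * p * mom F₀ (Sum.inl 1) (Sum.inl 0)
        + q * q * mom F₀ (Sum.inl 1) (Sum.inl 1)
        + q * r * mom F₀ (Sum.inl 1) (Sum.inl 2)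
        + r * p * mom F₀ (Sum.inl 2) (Sum.inl 0)
        + r * q * mom F₀ (Sum.inl 2) (Sum.inl 1)
        + r * r * mom F₀ (Sum.inl 2) (Sum.inl 2)
        + p * t * mom F₀ (Sum.inl 0) (Sum.inr 0)
        + p * u * mom F₀ (Sum.inl 0) (Sum.inr 1)
        + p * v * mom F₀ (Sum.inl 0) (Sum.inr 2)
        + q * t * mom F₀ (Sum.inl 1) (Sum.inr 0)
        + q * u * mom F₀ (Sum.inl 1) (Sum.inr 1)
        + q * v * mom F₀ (Sum.inl 1) (Sum.inr 2)
        + r * t * mom F₀ (Sum.inl 2) (Sum.inr 0)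
        + r * u * mom F₀ (Sum.inl 2) (Sum.inr 1)
        + r * v * mom F₀ (Sum.inl 2) (Sum.inr 2)
        + t * p * mom F₀ (Sum.inl 0) (Sum.inr 0)
        + t * q * mom F₀ (Sum.inl 1) (Sum.inr 0)
        + t * r * mom F₀ (Sum.inl 2) (Sum.inr 0)
        + u * p * mom F₀ (Sum.inl 0) (Sum.inr 1)
        + u * q * mom F₀ (Sum.inl 1) (Sum.inr 1)
        + u * r * mom F₀ (Sum.inl 2) (Sum.inr 1)
        + v * p * mom F₀ (Sum.inl 0) (Sum.inr 2)
        + v * q * mom F₀ (Sum.inl 1) (Sum.inr 2)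
        + v * r * mom F₀ (Sum.inl 2) (Sum.inr 2)
        + t * t * mom F₀ (Sum.inr 0) (Sum.inr 0)
        + t * u * mom F₀ (Sum.inr 0) (Sum.inr 1)
        + t * v * mom F₀ (Sum.inr 0) (Sum.inr 2)
        + u * t * mom F₀ (Sum.inr 1) (Sum.inr 0)
        + u * u * mom F₀ (Sum.inr 1) (Sum.inr 1)
        + u * v * mom F₀ (Sum.inr 1) (Sum.inr 2)
        + v * t * mom F₀ (Sum.inr 2) (Sum.inr 0)
        + v * u * mom F₀ (Sum.inr 2) (Sum.inr 1)
        + v * v * mom F₀ (Sum.inr 2) (Sum.inr 2) := by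
  simp only [Fintype.sum_sum_type, Fin.sum_univ_three, Sum.elim_inl, Sum.elim_inr, momSymm',
    Matrix.cons_val_zero, Matrix.cons_val_one, Matrix.head_cons, Matrix.cons_val_two,
    Matrix.tail_cons]
  ring


set_option maxHeartbeats 2000000 in
lemma abstract21 (A0 A1 A2 B00 B01 B02 B10 B11 B12 B20 B21 B22 C00 C01 C02 C10 C11 C12 C20 C21 C22 : ℝ)
    (hQ0 : ∀ L t u v : ℝ, (L ≠ 0 ∨ t ≠ 0 ∨ u ≠ 0 ∨ v ≠ 0) →
      0 < L ^ 2 * A0 + 2 * L * (t * B00 + u * B01 + v * B02) + (t * t * C00 + t * u * C01 + t * v * C02 + u * t * C10 + u * u * C11 + u * v * C12 + v * t * C20 + v * u * C21 + v * v * C22))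
    (hQ1 : ∀ L t u v : ℝ, (L ≠ 0 ∨ t ≠ 0 ∨ u ≠ 0 ∨ v ≠ 0) →
      0 < L ^ 2 * A1 + 2 * L * (t * B10 + u * B11 + v * B12) + (t * t * C00 + t * u * C01 + t * v * C02 + u * t * C10 + u * u * C11 + u * v * C12 + v * t * C20 + v * u * C21 + v * v * C22))
    (hQ2 : ∀ L t u v : ℝ, (L ≠ 0 ∨ t ≠ 0 ∨ u ≠ 0 ∨ v ≠ 0) →
      0 < L ^ 2 * A2 + 2 * L * (t * B20 + u * B21 + v * B22) + (t * t * C00 + t * u * C01 + t * v * C02 + u * t * C10 + u * u * C11 + u * v * C12 + v * t * C20 + v * u * C21 + v * v * C22))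
    (hQnn : ∀ t u v : ℝ, 0 ≤ t * t * C00 + t * u * C01 + t * v * C02 + u * t * C10 + u * u * C11 + u * v * C12 + v * t * C20 + v * u * C21 + v * v * C22) :
    0 < A0 + A1 + A2 ∧ 0 < C00 + C11 + C22 ∧
    0 < (A0 + A1 + A2) * (C00 + C11 + C22) - (B00 + B11 + B22) ^ 2 ∧
    (B12 - B21) ^ 2 + (B20 - B02) ^ 2 + (B01 - B10) ^ 2
      < (A0 + A1 + A2) * (C00 + C11 + C22) - (B00 + B11 + B22) ^ 2 := by
  have hA0 : 0 < A0 := by have := hQ0 1 0 0 0 (Or.inl one_ne_zero); linarith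
  have hA1 : 0 < A1 := by have := hQ1 1 0 0 0 (Or.inl one_ne_zero); linarith
  have hA2 : 0 < A2 := by have := hQ2 1 0 0 0 (Or.inl one_ne_zero); linarith
  have hC0 : 0 < C00 := by have := hQ0 0 1 0 0 (Or.inr (Or.inl one_ne_zero)); linarith
  have hC1 : 0 < C11 := by have := hQ0 0 0 1 0 (Or.inr (Or.inr (Or.inl one_ne_zero))); linarith
  have hC2 : 0 < C22 := by have := hQ0 0 0 0 1 (Or.inr (Or.inr (Or.inr one_ne_zero))); linarith
  have ha : 0 < A0 + A1 + A2 := by linarith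
  set b := B00 + B11 + B22 with hbdef
  set c := C00 + C11 + C22 with hcdef
  clear_value b c
  have hc : 0 < c := by rw [hcdef]; linarith
  have f0 := hQ0 c (-b) 0 0 (Or.inl hc.ne')
  have f1 := hQ1 c 0 (-b) 0 (Or.inl hc.ne')
  have f2 := hQ2 c 0 0 (-b) (Or.inl hc.ne')
  have hsum : 0 < c ^ 2 * (A0 + A1 + A2) - 2 * c * b * b + b ^ 2 * c := by
    rw [hbdef, hcdef] at f0 f1 f2 ⊢
    exact ((add_pos (add_pos f0 f1) f2).trans_eq (by ring))
  clear f0 f1 f2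
  have hacb : 0 < (A0 + A1 + A2) * c - b ^ 2 := by nlinarith [hsum, hc]
  clear hsum
  refine ⟨ha, hc, hacb, ?_⟩
  set w0 := B12 - B21 with hw0def
  set w1 := B20 - B02 with hw1def
  set w2 := B01 - B10 with hw2def
  set s2 := b ^ 2 + w0 ^ 2 + w1 ^ 2 + w2 ^ 2 with hs2def
  clear_value w0 w1 w2 s2
  by_cases hz : s2 = 0
  · have hzz : b ^ 2 + w0 ^ 2 + w1 ^ 2 + w2 ^ 2 = 0 := by rw [← hs2def]; exact hz
    have hb0 : b = 0 := by
      have : b ^ 2 = 0 := by nlinarith [sq_nonneg b, sq_nonneg w0, sq_nonneg w1, sq_nonneg w2]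
      exact pow_eq_zero_iff two_ne_zero |>.mp this
    have hw00 : w0 = 0 := by
      have : w0 ^ 2 = 0 := by nlinarith [sq_nonneg b, sq_nonneg w0, sq_nonneg w1, sq_nonneg w2]
      exact pow_eq_zero_iff two_ne_zero |>.mp this
    have hw10 : w1 = 0 := by
      have : w1 ^ 2 = 0 := by nlinarith [sq_nonneg b, sq_nonneg w0, sq_nonneg w1, sq_nonneg w2]
      exact pow_eq_zero_iff two_ne_zero |>.mp this
    have hw20 : w2 = 0 := by
      have : w2 ^ 2 = 0 := by nlinarith [sq_nonneg b, sq_nonneg w0, sq_nonneg w1, sq_nonneg w2]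
      exact pow_eq_zero_iff two_ne_zero |>.mp this
    rw [hb0] at hacb
    rw [hw00, hw10, hw20, hb0]
    norm_num at hacb ⊢
    linarith [hacb]
  · have hs2pos : 0 < s2 := lt_of_le_of_ne (by rw [hs2def]; positivity) (Ne.symm hz)
    set CE := (b * b * C00 + b * w2 * C01 + b * (-w1) * C02 + w2 * b * C10 + w2 * w2 * C11 + w2 * (-w1) * C12 + (-w1) * b * C20 + (-w1) * w2 * C21 + (-w1) * (-w1) * C22)
      + ((-w2) * (-w2) * C00 + (-w2) * b * C01 + (-w2) * w0 * C02 + b * (-w2) * C10 + b * b * C11 + b * w0 * C12 + w0 * (-w2) * C20 + w0 * b * C21 + w0 * w0 * C22)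
      + (w1 * w1 * C00 + w1 * (-w0) * C01 + w1 * b * C02 + (-w0) * w1 * C10 + (-w0) * (-w0) * C11 + (-w0) * b * C12 + b * w1 * C20 + b * (-w0) * C21 + b * b * C22) with hCEdef
    clear_value CE
    have hcase : b ≠ 0 ∨ w0 ≠ 0 ∨ w1 ≠ 0 ∨ w2 ≠ 0 := by
      by_contra hcc
      push_neg at hcc
      obtain ⟨h1, h2, h3, h4⟩ := hcc
      apply hz
      rw [hs2def, h1, h2, h3, h4]; ring
    have hCEpos : 0 < CE := by
      rw [hCEdef]
      rcases hcase with h | h | h | h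
      · have h0 := hQ0 0 b w2 (-w1) (Or.inr (Or.inl h))
        exact ((add_pos_of_pos_of_nonneg (add_pos_of_pos_of_nonneg h0
          (hQnn (-w2) b w0)) (hQnn w1 (-w0) b)).trans_eq (by ring))
      · have h0 := hQ1 0 (-w2) b w0 (Or.inr (Or.inr (Or.inr h)))
        exact ((add_pos_of_pos_of_nonneg (add_pos_of_pos_of_nonneg h0
          (hQnn b w2 (-w1))) (hQnn w1 (-w0) b)).trans_eq (by ring))
      · have h0 := hQ2 0 w1 (-w0) b (Or.inr (Or.inl h))
        exact ((add_pos_of_pos_of_nonneg (add_pos_of_pos_of_nonneg h0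
          (hQnn b w2 (-w1))) (hQnn (-w2) b w0)).trans_eq (by ring))
      · have h0 := hQ0 0 b w2 (-w1) (Or.inr (Or.inr (Or.inl h)))
        exact ((add_pos_of_pos_of_nonneg (add_pos_of_pos_of_nonneg h0
          (hQnn (-w2) b w0)) (hQnn w1 (-w0) b)).trans_eq (by ring))
    have hCle : CE ≤ c * s2 := by
      have h9 := hQnn w0 w1 w2
      rw [hCEdef, hs2def, hcdef]
      exact sub_nonneg.mp ((hQnn w0 w1 w2).trans_eq (by ring))
    have hE : ∀ L M : ℝ, L ≠ 0 → 0 < L ^ 2 * (A0 + A1 + A2) + 2 * L * M * s2 + M ^ 2 * CE := by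
      intro L M hL
      have e0 := hQ0 L (M * b) (M * w2) (-(M * w1)) (Or.inl hL)
      have e1 := hQ1 L (-(M * w2)) (M * b) (M * w0) (Or.inl hL)
      have e2 := hQ2 L (M * w1) (-(M * w0)) (M * b) (Or.inl hL)
      simp only [hbdef, hw0def, hw1def, hw2def] at e0 e1 e2
      simp only [hs2def, hCEdef, hbdef, hw0def, hw1def, hw2def]
      exact ((add_pos (add_pos e0 e1) e2).trans_eq (by ring))
    have hmain := hE CE (-s2) hCEpos.ne'
    have hq2 : 0 < CE * (CE * (A0 + A1 + A2) - s2 ^ 2) := hmain.trans_eq (by ring)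
    have hCEa : s2 ^ 2 < CE * (A0 + A1 + A2) := by nlinarith [hq2, hCEpos]
    have hfin : s2 < (A0 + A1 + A2) * c := by
      nlinarith [hCEa, hCle, ha, hs2pos, mul_le_mul_of_nonneg_left hCle ha.le]
    rw [hs2def] at hfin
    linarith [hfin]


lemma a_eq (F₀ : E3 → E3 → ℝ)
    (hmeas : Measurable fun p : E3 × E3 => F₀ p.1 p.2)
    (hpos : ∀ᵐ p : E3 × E3 ∂volume, 0 ≤ F₀ p.1 p.2)
    (hint2 : Integrable fun p : E3 × E3 => (‖p.1‖ ^ 2 + ‖p.2‖ ^ 2) * F₀ p.1 p.2) :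
    (∫ p : E3 × E3, ‖p.1‖ ^ 2 * F₀ p.1 p.2)
      = mom F₀ (Sum.inl 0) (Sum.inl 0) + mom F₀ (Sum.inl 1) (Sum.inl 1) + mom F₀ (Sum.inl 2) (Sum.inl 2) := by
  have hpt : (fun p : E3 × E3 => ‖p.1‖ ^ 2 * F₀ p.1 p.2)
      = fun p => ∑ i : Fin 3, zz p (Sum.inl i) * zz p (Sum.inl i) * F₀ p.1 p.2 := by
    funext p
    rw [norm_sq_eq, Finset.sum_mul]
    exact Finset.sum_congr rfl fun i _ => by simp only [zz, Sum.elim_inl]; ring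
  rw [hpt, integral_finset_sum _ fun i _ => integ_mom F₀ hmeas hpos hint2 _ _,
    Fin.sum_univ_three]
  rfl

lemma c_eq (F₀ : E3 → E3 → ℝ)
    (hmeas : Measurable fun p : E3 × E3 => F₀ p.1 p.2)
    (hpos : ∀ᵐ p : E3 × E3 ∂volume, 0 ≤ F₀ p.1 p.2)
    (hint2 : Integrable fun p : E3 × E3 => (‖p.1‖ ^ 2 + ‖p.2‖ ^ 2) * F₀ p.1 p.2) :
    (∫ p : E3 × E3, ‖p.2‖ ^ 2 * F₀ p.1 p.2)
      = mom F₀ (Sum.inr 0) (Sum.inr 0) + mom F₀ (Sum.inr 1) (Sum.inr 1) + mom F₀ (Sum.inr 2) (Sum.inr 2) := by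
  have hpt : (fun p : E3 × E3 => ‖p.2‖ ^ 2 * F₀ p.1 p.2)
      = fun p => ∑ i : Fin 3, zz p (Sum.inr i) * zz p (Sum.inr i) * F₀ p.1 p.2 := by
    funext p
    rw [norm_sq_eq, Finset.sum_mul]
    exact Finset.sum_congr rfl fun i _ => by simp only [zz, Sum.elim_inr]; ring
  rw [hpt, integral_finset_sum _ fun i _ => integ_mom F₀ hmeas hpos hint2 _ _,
    Fin.sum_univ_three]
  rfl

lemma b_eq (F₀ : E3 → E3 → ℝ)
    (hmeas : Measurable fun p : E3 × E3 => F₀ p.1 p.2)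
    (hpos : ∀ᵐ p : E3 × E3 ∂volume, 0 ≤ F₀ p.1 p.2)
    (hint2 : Integrable fun p : E3 × E3 => (‖p.1‖ ^ 2 + ‖p.2‖ ^ 2) * F₀ p.1 p.2) :
    (∫ p : E3 × E3, dot3 p.1 p.2 * F₀ p.1 p.2)
      = mom F₀ (Sum.inl 0) (Sum.inr 0) + mom F₀ (Sum.inl 1) (Sum.inr 1) + mom F₀ (Sum.inl 2) (Sum.inr 2) := by
  have hpt : (fun p : E3 × E3 => dot3 p.1 p.2 * F₀ p.1 p.2)
      = fun p => ∑ i : Fin 3, zz p (Sum.inl i) * zz p (Sum.inr i) * F₀ p.1 p.2 := by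
    funext p
    rw [dot3, Finset.sum_mul]
    exact Finset.sum_congr rfl fun i _ => by simp only [zz, Sum.elim_inl, Sum.elim_inr]
  rw [hpt, integral_finset_sum _ fun i _ => integ_mom F₀ hmeas hpos hint2 _ _,
    Fin.sum_univ_three]
  rfl

lemma Rentry (F₀ : E3 → E3 → ℝ)
    (hmeas : Measurable fun p : E3 × E3 => F₀ p.1 p.2)
    (hpos : ∀ᵐ p : E3 × E3 ∂volume, 0 ≤ F₀ p.1 p.2)
    (hint2 : Integrable fun p : E3 × E3 => (‖p.1‖ ^ 2 + ‖p.2‖ ^ 2) * F₀ p.1 p.2)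
    (i j : Fin 3) :
    (∫ p : E3 × E3, (p.1 i * p.2 j - p.2 i * p.1 j) * F₀ p.1 p.2)
      = mom F₀ (Sum.inl i) (Sum.inr j) - mom F₀ (Sum.inl j) (Sum.inr i) := by
  have hpt : (fun p : E3 × E3 => (p.1 i * p.2 j - p.2 i * p.1 j) * F₀ p.1 p.2)
      = fun p => zz p (Sum.inl i) * zz p (Sum.inr j) * F₀ p.1 p.2
          - zz p (Sum.inl j) * zz p (Sum.inr i) * F₀ p.1 p.2 := by
    funext p
    simp only [zz, Sum.elim_inl, Sum.elim_inr]
    ring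
  rw [hpt, integral_sub (integ_mom F₀ hmeas hpos hint2 _ _)
    (integ_mom F₀ hmeas hpos hint2 _ _)]
  rfl


/-- the moments of a normalized distribution lie in the parameter set `𝒪`. -/
theorem statement5 (F₀ : E3 → E3 → ℝ)
    (hmeas : Measurable fun p : E3 × E3 => F₀ p.1 p.2)
    (hpos : ∀ᵐ p : E3 × E3 ∂volume, 0 ≤ F₀ p.1 p.2)
    (hint0 : Integrable fun p : E3 × E3 => F₀ p.1 p.2)
    (hint2 : Integrable fun p : E3 × E3 => (‖p.1‖ ^ 2 + ‖p.2‖ ^ 2) * F₀ p.1 p.2)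
    (hmass : (∫ p : E3 × E3, F₀ p.1 p.2) = 1)
    (hx : ∀ i : Fin 3, (∫ p : E3 × E3, p.1 i * F₀ p.1 p.2) = 0)
    (hv : ∀ i : Fin 3, (∫ p : E3 × E3, p.2 i * F₀ p.1 p.2) = 0) :
    0 < (∫ p : E3 × E3, ‖p.1‖ ^ 2 * F₀ p.1 p.2) ∧
    0 < (∫ p : E3 × E3, ‖p.2‖ ^ 2 * F₀ p.1 p.2) ∧
    0 < (∫ p : E3 × E3, ‖p.1‖ ^ 2 * F₀ p.1 p.2) * (∫ p : E3 × E3, ‖p.2‖ ^ 2 * F₀ p.1 p.2)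
        - (∫ p : E3 × E3, dot3 p.1 p.2 * F₀ p.1 p.2) ^ 2 ∧
    traceAbs (Matrix.of fun i j =>
        ∫ p : E3 × E3, (p.1 i * p.2 j - p.2 i * p.1 j) * F₀ p.1 p.2)
      < 2 * Real.sqrt
          ((∫ p : E3 × E3, ‖p.1‖ ^ 2 * F₀ p.1 p.2) *
              (∫ p : E3 × E3, ‖p.2‖ ^ 2 * F₀ p.1 p.2)
            - (∫ p : E3 × E3, dot3 p.1 p.2 * F₀ p.1 p.2) ^ 2) := by

  have hNZ : ∀ (x y : Fin 3 → ℝ) (k : Fin 3 ⊕ Fin 3), Sum.elim x y k ≠ 0 →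
      Sum.elim x y ≠ (0 : (Fin 3 ⊕ Fin 3) → ℝ) :=
    fun x y k hk H => hk (by simpa using congrFun H k)
  have hQ0 : ∀ L t u v : ℝ, (L ≠ 0 ∨ t ≠ 0 ∨ u ≠ 0 ∨ v ≠ 0) →
      0 < L ^ 2 * mom F₀ (Sum.inl 0) (Sum.inl 0) + 2 * L * (t * mom F₀ (Sum.inl 0) (Sum.inr 0) + u * mom F₀ (Sum.inl 0) (Sum.inr 1) + v * mom F₀ (Sum.inl 0) (Sum.inr 2)) + (t * t * mom F₀ (Sum.inr 0) (Sum.inr 0) + t * u * mom F₀ (Sum.inr 0) (Sum.inr 1) + t * v * mom F₀ (Sum.inr 0) (Sum.inr 2) + u * t * mom F₀ (Sum.inr 1) (Sum.inr 0) + u * u * mom F₀ (Sum.inr 1) (Sum.inr 1) + u * v * mom F₀ (Sum.inr 1) (Sum.inr 2) + v * t * mom F₀ (Sum.inr 2) (Sum.inr 0) + v * u * mom F₀ (Sum.inr 2) (Sum.inr 1) + v * v * mom F₀ (Sum.inr 2) (Sum.inr 2)) := by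
    intro L t u v h
    have hw : Sum.elim ![L, 0, 0] ![t, u, v] ≠ (0 : (Fin 3 ⊕ Fin 3) → ℝ) := by
      rcases h with h | h | h | h
      · exact hNZ _ _ (Sum.inl 0) (by simpa using h)
      · exact hNZ _ _ (Sum.inr 0) (by simpa using h)
      · exact hNZ _ _ (Sum.inr 1) (by simpa using h)
      · exact hNZ _ _ (Sum.inr 2) (by simpa using h)
    have hh := qform_pos F₀ hmeas hpos hint2 hmass _ hw
    rw [qexpand] at hh
    exact hh.trans_eq (by ring)
  have hQ1 : ∀ L t u v : ℝ, (L ≠ 0 ∨ t ≠ 0 ∨ u ≠ 0 ∨ v ≠ 0) →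
      0 < L ^ 2 * mom F₀ (Sum.inl 1) (Sum.inl 1) + 2 * L * (t * mom F₀ (Sum.inl 1) (Sum.inr 0) + u * mom F₀ (Sum.inl 1) (Sum.inr 1) + v * mom F₀ (Sum.inl 1) (Sum.inr 2)) + (t * t * mom F₀ (Sum.inr 0) (Sum.inr 0) + t * u * mom F₀ (Sum.inr 0) (Sum.inr 1) + t * v * mom F₀ (Sum.inr 0) (Sum.inr 2) + u * t * mom F₀ (Sum.inr 1) (Sum.inr 0) + u * u * mom F₀ (Sum.inr 1) (Sum.inr 1) + u * v * mom F₀ (Sum.inr 1) (Sum.inr 2) + v * t * mom F₀ (Sum.inr 2) (Sum.inr 0) + v * u * mom F₀ (Sum.inr 2) (Sum.inr 1) + v * v * mom F₀ (Sum.inr 2) (Sum.inr 2)) := by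
    intro L t u v h
    have hw : Sum.elim ![0, L, 0] ![t, u, v] ≠ (0 : (Fin 3 ⊕ Fin 3) → ℝ) := by
      rcases h with h | h | h | h
      · exact hNZ _ _ (Sum.inl 1) (by simpa using h)
      · exact hNZ _ _ (Sum.inr 0) (by simpa using h)
      · exact hNZ _ _ (Sum.inr 1) (by simpa using h)
      · exact hNZ _ _ (Sum.inr 2) (by simpa using h)
    have hh := qform_pos F₀ hmeas hpos hint2 hmass _ hw
    rw [qexpand] at hh
    exact hh.trans_eq (by ring)
  have hQ2 : ∀ L t u v : ℝ, (L ≠ 0 ∨ t ≠ 0 ∨ u ≠ 0 ∨ v ≠ 0) →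
      0 < L ^ 2 * mom F₀ (Sum.inl 2) (Sum.inl 2) + 2 * L * (t * mom F₀ (Sum.inl 2) (Sum.inr 0) + u * mom F₀ (Sum.inl 2) (Sum.inr 1) + v * mom F₀ (Sum.inl 2) (Sum.inr 2)) + (t * t * mom F₀ (Sum.inr 0) (Sum.inr 0) + t * u * mom F₀ (Sum.inr 0) (Sum.inr 1) + t * v * mom F₀ (Sum.inr 0) (Sum.inr 2) + u * t * mom F₀ (Sum.inr 1) (Sum.inr 0) + u * u * mom F₀ (Sum.inr 1) (Sum.inr 1) + u * v * mom F₀ (Sum.inr 1) (Sum.inr 2) + v * t * mom F₀ (Sum.inr 2) (Sum.inr 0) + v * u * mom F₀ (Sum.inr 2) (Sum.inr 1) + v * v * mom F₀ (Sum.inr 2) (Sum.inr 2)) := by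
    intro L t u v h
    have hw : Sum.elim ![0, 0, L] ![t, u, v] ≠ (0 : (Fin 3 ⊕ Fin 3) → ℝ) := by
      rcases h with h | h | h | h
      · exact hNZ _ _ (Sum.inl 2) (by simpa using h)
      · exact hNZ _ _ (Sum.inr 0) (by simpa using h)
      · exact hNZ _ _ (Sum.inr 1) (by simpa using h)
      · exact hNZ _ _ (Sum.inr 2) (by simpa using h)
    have hh := qform_pos F₀ hmeas hpos hint2 hmass _ hw
    rw [qexpand] at hh
    exact hh.trans_eq (by ring)
  have hQnn : ∀ t u v : ℝ, 0 ≤ t * t * mom F₀ (Sum.inr 0) (Sum.inr 0) + t * u * mom F₀ (Sum.inr 0) (Sum.inr 1) + t * v * mom F₀ (Sum.inr 0) (Sum.inr 2) + u * t * mom F₀ (Sum.inr 1) (Sum.inr 0) + u * u * mom F₀ (Sum.inr 1) (Sum.inr 1) + u * v * mom F₀ (Sum.inr 1) (Sum.inr 2) + v * t * mom F₀ (Sum.inr 2) (Sum.inr 0) + v * u * mom F₀ (Sum.inr 2) (Sum.inr 1) + v * v * mom F₀ (Sum.inr 2) (Sum.inr 2) := by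
    intro t u v
    have hh := qform_nonneg F₀ hmeas hpos hint2 (Sum.elim ![0, 0, 0] ![t, u, v])
    rw [qexpand] at hh
    exact hh.trans_eq (by ring)
  obtain ⟨h1, h2, h3, h4⟩ := abstract21 (mom F₀ (Sum.inl 0) (Sum.inl 0)) (mom F₀ (Sum.inl 1) (Sum.inl 1)) (mom F₀ (Sum.inl 2) (Sum.inl 2))
    (mom F₀ (Sum.inl 0) (Sum.inr 0)) (mom F₀ (Sum.inl 0) (Sum.inr 1)) (mom F₀ (Sum.inl 0) (Sum.inr 2)) (mom F₀ (Sum.inl 1) (Sum.inr 0)) (mom F₀ (Sum.inl 1) (Sum.inr 1)) (mom F₀ (Sum.inl 1) (Sum.inr 2))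
    (mom F₀ (Sum.inl 2) (Sum.inr 0)) (mom F₀ (Sum.inl 2) (Sum.inr 1)) (mom F₀ (Sum.inl 2) (Sum.inr 2))
    (mom F₀ (Sum.inr 0) (Sum.inr 0)) (mom F₀ (Sum.inr 0) (Sum.inr 1)) (mom F₀ (Sum.inr 0) (Sum.inr 2)) (mom F₀ (Sum.inr 1) (Sum.inr 0)) (mom F₀ (Sum.inr 1) (Sum.inr 1)) (mom F₀ (Sum.inr 1) (Sum.inr 2))
    (mom F₀ (Sum.inr 2) (Sum.inr 0)) (mom F₀ (Sum.inr 2) (Sum.inr 1)) (mom F₀ (Sum.inr 2) (Sum.inr 2)) hQ0 hQ1 hQ2 hQnn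
  have haeq := a_eq F₀ hmeas hpos hint2
  have hceq := c_eq F₀ hmeas hpos hint2
  have hbeq := b_eq F₀ hmeas hpos hint2
  have hRmat : (Matrix.of fun i j =>
        ∫ p : E3 × E3, (p.1 i * p.2 j - p.2 i * p.1 j) * F₀ p.1 p.2)
      = crossMat ![mom F₀ (Sum.inl 1) (Sum.inr 2) - mom F₀ (Sum.inl 2) (Sum.inr 1), mom F₀ (Sum.inl 2) (Sum.inr 0) - mom F₀ (Sum.inl 0) (Sum.inr 2),
          mom F₀ (Sum.inl 0) (Sum.inr 1) - mom F₀ (Sum.inl 1) (Sum.inr 0)] := by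
    ext i j
    fin_cases i <;> fin_cases j <;>
      · rw [Matrix.of_apply, Rentry F₀ hmeas hpos hint2]
        simp [crossMat, Matrix.vecHead, Matrix.vecTail]
        try ring
  refine ⟨by rw [haeq]; exact h1, by rw [hceq]; exact h2,
    by rw [haeq, hceq, hbeq]; exact h3, ?_⟩
  rw [hRmat, traceAbs_crossMat, haeq, hceq, hbeq]
  simp only [Matrix.cons_val_zero, Matrix.cons_val_one, Matrix.head_cons,
    Matrix.cons_val_two, Matrix.tail_cons]
  have hs := Real.sqrt_lt_sqrt (by positivity) h4
  linarith [hs]
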